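/- For n > k ≥ 1, the automorphisms σ_0, …, σ_{n−1} of PX(n,k), where σ_b swaps (b−i, x) with (b−i, x^i) for i = 1,…,k (x^i being x with the i-th bit flipped) and fixes all other vertices, pairwise commute and generate an elementary abelian 2-group of order 2^n. -/

import Mathlib

/-- The Praeger–Xu graph `PX(n,k)`. -/
def PXGraph (n k : ℕ) : SimpleGraph (ZMod n × (Fin k → Bool)) :=
  SimpleGraph.fromRel (fun u v =>
    v.1 = u.1 + 1 ∧ ∀ (j : ℕ) (h : j + 1 < k),
      v.2 ⟨j, Nat.lt_of_succ_lt h⟩ = u.2 ⟨j + 1, h⟩)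

/-!
A pattern `s : ZMod n → Bool` acts on `PX(n,k)` by flipping bit `i` of every vertex `(a, x)`
with `s (a + i + 1) = true`. An edge shifts the string by one position while increasing `a` by
one, so bit `j` of its head and bit `j + 1` of its tail are flipped together and the action is
by automorphisms; `σ_b` is the pattern supported at `b`. This is a homomorphism from the
elementary abelian group `ZMod n → Bool` of order `2^n`, so the `σ_b` commute and square to the
identity. It is injective because bit `0` of the vertex `(c - 1, 0)` reads off `s c`, and the
group generated by the `σ_b` is its image.
-/

def SimpleGraph.Iso.fromRel {V W : Type*} {r : V → V → Prop} {r' : W → W → Prop} (e : V ≃ W)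
    (he : ∀ u v, r' (e u) (e v) ↔ r u v) :
    SimpleGraph.fromRel r ≃g SimpleGraph.fromRel r' where
  toEquiv := e
  map_rel_iff' {u v} := by simp [SimpleGraph.fromRel_adj, he, e.injective.ne_iff]

theorem Subgroup.closure_range_ofAdd_single_true (ι : Type*) [Fintype ι] [DecidableEq ι] :
    Subgroup.closure (Set.range fun b : ι => Multiplicative.ofAdd (Pi.single b true)) = ⊤ := by
  refine eq_top_iff.2 fun s _ => ?_
  rw [← ofAdd_toAdd s, ← Finset.univ_sum_single (Multiplicative.toAdd s), ofAdd_sum]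
  refine Subgroup.prod_mem _ fun b _ => ?_
  cases h : Multiplicative.toAdd s b
  · simp [← Bool.zero_eq_false]
  · exact Subgroup.subset_closure ⟨b, rfl⟩

namespace PXGraph

variable {n k : ℕ}

def bitFlip : Multiplicative (ZMod n → Bool) →* Equiv.Perm (ZMod n × (Fin k → Bool)) where
  toFun s := Equiv.prodShear (Equiv.refl _) fun a =>
    Equiv.addRight fun i : Fin k => s.toAdd (a + (i + 1 : ℕ))
  map_one' := by ext <;> simp
  map_mul' s t := Equiv.ext fun v => Prod.ext rfl <| funext fun i => by
    simp only [toAdd_mul, Equiv.Perm.mul_apply, Equiv.prodShear_apply, Equiv.refl_apply,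
      Equiv.coe_addRight, Pi.add_apply]
    ring

theorem bitFlip_apply (s : Multiplicative (ZMod n → Bool)) (v : ZMod n × (Fin k → Bool)) :
    bitFlip s v = (v.1, v.2 + fun i : Fin k => s.toAdd (v.1 + (i + 1 : ℕ))) :=
  rfl

theorem bitFlip_injective (hk : 0 < k) :
    Function.Injective
      (bitFlip : Multiplicative (ZMod n → Bool) →* Equiv.Perm (ZMod n × (Fin k → Bool))) := by
  refine (injective_iff_map_eq_one _).2 fun s hs => ?_
  refine Multiplicative.toAdd.injective (funext fun c => ?_)
  simpa [bitFlip_apply] using congrArg (fun g => (g (c - 1, 0)).2 ⟨0, hk⟩) hs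

theorem bitFlip_mul_self (s : Multiplicative (ZMod n → Bool)) :
    (bitFlip s * bitFlip s : Equiv.Perm (ZMod n × (Fin k → Bool))) = 1 :=
  Equiv.ext fun v => Prod.ext rfl <| funext fun i => by
    simp [bitFlip_apply, add_assoc, BooleanRing.add_self]

def bitFlipIso (s : Multiplicative (ZMod n → Bool)) : PXGraph n k ≃g PXGraph n k :=
  SimpleGraph.Iso.fromRel (bitFlip s) fun u v => by
    simp only [bitFlip_apply]
    refine and_congr_right fun h => forall₂_congr fun j hj => ?_
    have hshift : u.1 + 1 + ((j + 1 : ℕ) : ZMod n) = u.1 + ((j + 1 + 1 : ℕ) : ZMod n) := by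
      push_cast; ring
    simp only [Pi.add_apply, h, hshift, add_left_inj]

def sigma (b : ZMod n) : PXGraph n k ≃g PXGraph n k :=
  bitFlipIso (.ofAdd (Pi.single b true))

theorem sigma_apply (b : ZMod n) (v : ZMod n × (Fin k → Bool)) :
    sigma b v = (v.1, fun i : Fin k =>
      if v.1 = b - ((i + 1 : ℕ) : ZMod n) then !(v.2 i) else v.2 i) := by
  refine Prod.ext rfl (funext fun i => ?_)
  show v.2 i + (Pi.single b true : ZMod n → Bool) (v.1 + ((i + 1 : ℕ) : ZMod n)) = _
  simp only [Pi.single_apply, eq_sub_iff_add_eq]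
  split_ifs <;> simp [Bool.add_eq_xor]

theorem sigma_comm (b c : ZMod n) (v : ZMod n × (Fin k → Bool)) :
    sigma b (sigma c v) = sigma c (sigma b v) :=
  Equiv.congr_fun ((Commute.all (S := Multiplicative (ZMod n → Bool)) _ _).map bitFlip).eq v

theorem closure_range_sigma [NeZero n] :
    Subgroup.closure (Set.range fun b : ZMod n => (sigma b : PXGraph n k ≃g _).toEquiv) =
      (bitFlip : Multiplicative (ZMod n → Bool) →* _).range := by
  rw [MonoidHom.range_eq_map, ← Subgroup.closure_range_ofAdd_single_true, MonoidHom.map_closure,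
    ← Set.range_comp]
  rfl

end PXGraph

open PXGraph in
/-- For `n > k ≥ 1`, the local automorphisms `σ_b` of `PX(n,k)` (where `σ_b` flips the
`i`-th bit of the string coordinate of vertices in position `b − i`, for `i = 1,…,k`)
pairwise commute and generate an elementary abelian 2-group of order `2^n`. -/
theorem PX_sigma_automorphisms (n k : ℕ) (hk : 1 ≤ k) (hnk : k < n) :
    ∃ σ : ZMod n → (PXGraph n k ≃g PXGraph n k),
      (∀ (b : ZMod n) (v : ZMod n × (Fin k → Bool)),
        σ b v = (v.1, fun i : Fin k =>
          if v.1 = b - (((i : ℕ) + 1 : ℕ) : ZMod n) then !(v.2 i) else v.2 i)) ∧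
      (∀ (b c : ZMod n) (v : ZMod n × (Fin k → Bool)), σ b (σ c v) = σ c (σ b v)) ∧
      (∀ g ∈ Subgroup.closure (Set.range fun b : ZMod n => (σ b).toEquiv), g * g = 1) ∧
      Nat.card
        (Subgroup.closure (Set.range fun b : ZMod n => (σ b).toEquiv)) = 2 ^ n := by
  have : NeZero n := ⟨by omega⟩
  refine ⟨sigma, sigma_apply, sigma_comm, ?_, ?_⟩
  · rw [closure_range_sigma]
    rintro _ ⟨s, rfl⟩
    exact bitFlip_mul_self s
  · rw [closure_range_sigma,
      ← Nat.card_congr (MonoidHom.ofInjective (bitFlip_injective hk)).toEquiv]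
    show Nat.card (ZMod n → Bool) = 2 ^ n
    rw [Nat.card_fun, Nat.card_zmod, Nat.card_eq_fintype_card, Fintype.card_bool]
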